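/- arXiv:1102.5441 — 5 statements merged into one kernel-verified Lean document; each statement's English description precedes it below -/
import Mathlib

section
/- A finite simple graph G has a 2-coloring of cost at most k if and only if there exists a set S of at most k edges of G such that the graph G/S obtained from G by contracting the edges of S is bipartite. -/
open scoped Classical

variable {V : Type*}

/-- The spanning subgraph of `G` whose edges are the *bad* edges w.r.t. the
2-coloring `φ` (edges whose endpoints get the same color). -/
def badGraph (G : SimpleGraph V) (φ : V → Fin 2) : SimpleGraph V where
  Adj u v := G.Adj u v ∧ φ u = φ v
  symm := ⟨fun u v h => ⟨h.1.symm, h.2.symm⟩⟩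
  loopless := ⟨fun v h => G.loopless.irrefl v h.1⟩

/-- The spanning subgraph of `G` whose edges are the *good* edges w.r.t. the
2-coloring `φ` (edges whose endpoints get different colors). -/
def goodGraph (G : SimpleGraph V) (φ : V → Fin 2) : SimpleGraph V where
  Adj u v := G.Adj u v ∧ φ u ≠ φ v
  symm := ⟨fun u v h => ⟨h.1.symm, Ne.symm h.2⟩⟩
  loopless := ⟨fun v h => G.loopless.irrefl v h.1⟩

/-- `X` is a monochromatic component of the 2-coloring `φ` of `G`: the vertex set of a
connected component of the subgraph of `G` induced by one of the two color classes. -/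
def IsMonochromaticComponent (G : SimpleGraph V) (φ : V → Fin 2) (X : Set V) : Prop :=
  ∃ (i : Fin 2) (c : (SimpleGraph.induce (φ ⁻¹' {i}) G).ConnectedComponent),
    X = Subtype.val '' c.supp

/-- `X` is a good component of the 2-coloring `φ` of `G`: the vertex set of a connected
component of the spanning subgraph of `G` consisting of the good edges. -/
def IsGoodComponent (G : SimpleGraph V) (φ : V → Fin 2) (X : Set V) : Prop :=
  ∃ c : (goodGraph G φ).ConnectedComponent, X = c.supp

/-- The cost of a 2-coloring `φ` of `G`: the sum, over all monochromatic components `X`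
of `φ`, of `|X| - 1`. -/
noncomputable def cost (G : SimpleGraph V) (φ : V → Fin 2) : ℕ :=
  ∑ᶠ X ∈ {X : Set V | IsMonochromaticComponent G φ X}, (Nat.card X - 1)

/-- A 2-coloring is a `(T₁,T₂)`-extension if it colors every vertex of `T₁` with the first
color and every vertex of `T₂` with the second color. -/
def IsExtension (φ : V → Fin 2) (T1 T2 : Set V) : Prop :=
  (∀ x ∈ T1, φ x = 0) ∧ (∀ x ∈ T2, φ x = 1)

/-- A cheapest `(T₁,T₂)`-extension of `G`: no `(T₁,T₂)`-extension has strictly smaller cost. -/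
noncomputable def IsCheapestExtension (G : SimpleGraph V) (φ : V → Fin 2)
    (T1 T2 : Set V) : Prop :=
  IsExtension φ T1 T2 ∧ ∀ ψ : V → Fin 2, IsExtension ψ T1 T2 → cost G φ ≤ cost G ψ

/-- `X` is `p`-connected in `G`: `|X| ≥ p` and for all subsets `X₁, X₂ ⊆ X` with
`|X₁| = |X₂| ≤ p` there are `|X₁|` pairwise vertex-disjoint paths in `G`, each with one
endpoint in `X₁` and the other endpoint in `X₂`. -/
def PConnected (G : SimpleGraph V) (p : ℕ) (X : Set V) : Prop :=
  p ≤ Nat.card X ∧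
  ∀ X1 X2 : Finset V, ↑X1 ⊆ X → ↑X2 ⊆ X → X1.card = X2.card → X1.card ≤ p →
    ∃ (a b : Fin X1.card → V) (w : ∀ i, G.Walk (a i) (b i)),
      (∀ i, (w i).IsPath) ∧ (∀ i, a i ∈ X1) ∧ (∀ i, b i ∈ X2) ∧
      ∀ i j, i ≠ j → ∀ x, x ∈ (w i).support → x ∉ (w j).support

/-- `X` is well-connected in `G` if it is `(|X|/2)`-connected. -/
def WellConnected (G : SimpleGraph V) (X : Set V) : Prop :=
  PConnected G (Nat.card X / 2) X

/-- `d_G(X)`: the number of edges of `G` with exactly one endpoint in `X`. -/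
noncomputable def cutCard (G : SimpleGraph V) (X : Set V) : ℕ :=
  Nat.card {e : Sym2 V | e ∈ G.edgeSet ∧ ∃ a b, e = s(a, b) ∧ a ∈ X ∧ b ∉ X}

/-- `X` is an `(x,y)`-important set in `G`. -/
noncomputable def ImportantSet (G : SimpleGraph V) (x y : V) (X : Set V) : Prop :=
  x ∈ X ∧ y ∉ X ∧ (SimpleGraph.induce X G).Connected ∧
  ¬ ∃ X' : Set V, X ⊂ X' ∧ y ∉ X' ∧ (SimpleGraph.induce X' G).Connected ∧
      cutCard G X' ≤ cutCard G X

/-- `G` has a tree decomposition of width at most `w`. -/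
def HasTreewidthAtMost (G : SimpleGraph V) (w : ℕ) : Prop :=
  ∃ (n : ℕ) (T : SimpleGraph (Fin n)) (bag : Fin n → Finset V),
    T.IsTree ∧
    (∀ v : V, ∃ i, v ∈ bag i) ∧
    (∀ u v : V, G.Adj u v → ∃ i, u ∈ bag i ∧ v ∈ bag i) ∧
    (∀ v : V, (SimpleGraph.induce {i | v ∈ bag i} T).Connected) ∧
    (∀ i, (bag i).card ≤ w + 1)

/-- The treewidth of `G`: the minimum width over all tree decompositions of `G`. -/
noncomputable def treewidth (G : SimpleGraph V) : ℕ :=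
  sInf {w | HasTreewidthAtMost G w}

/-- The graph `G/S` obtained from `G` by contracting the edges of `S`: its vertices are the
connected components of the graph `(V(G), S)`, two distinct components being adjacent iff
`G` has an edge with one endpoint in each of them. -/
def contractEdges (G : SimpleGraph V) (S : Set (Sym2 V)) :
    SimpleGraph (SimpleGraph.fromEdgeSet S).ConnectedComponent where
  Adj c d := c ≠ d ∧ ∃ u v : V, G.Adj u v ∧
      (SimpleGraph.fromEdgeSet S).connectedComponentMk u = c ∧
      (SimpleGraph.fromEdgeSet S).connectedComponentMk v = d
  symm := by
    constructor
    rintro c d ⟨hcd, u, v, ha, hu, hv⟩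
    exact ⟨hcd.symm, v, u, ha.symm, hv, hu⟩
  loopless := ⟨fun c h => h.1 rfl⟩

/-- The graph `G*` obtained from `G` by adding a new vertex (here `none`) adjacent to
exactly the vertices of `Y`. -/
def addApex (G : SimpleGraph V) (Y : Set V) : SimpleGraph (Option V) :=
  SimpleGraph.fromRel (fun a b =>
    (∃ u v : V, a = some u ∧ b = some v ∧ G.Adj u v) ∨
    (∃ u : V, a = some u ∧ b = none ∧ u ∈ Y))

/-- The set `Z`: the union, over all `x ∈ T`, of all `(x, y*)`-important sets `X` in
`G* = addApex G Y` with `d_{G*}(X) ≤ p`. -/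
noncomputable def importantUnion (G : SimpleGraph V) (Y : Set V) (T : Set V) (p : ℕ) :
    Set (Option V) :=
  {w | ∃ x ∈ T, ∃ X : Set (Option V),
    ImportantSet (addApex G Y) (some x) none X ∧ cutCard (addApex G Y) X ≤ p ∧ w ∈ X}

/-!
The cost of `φ` is `|V|` minus the number of components of the graph of monochromatic
edges, and every graph has at least `|V|` minus its number of components edges, with
equality for forests. If `C` properly 2-colors `G/S`, the coloring `v ↦ C [v]` has all its
monochromatic edges inside components of `(V, S)`, so its cost is at most
`|V| - #components(V, S) ≤ |S|`. Conversely, a spanning forest of the monochromatic edges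
of `φ` has exactly `cost φ` edges, and `φ` descends to a proper coloring of the quotient.
-/

namespace SimpleGraph

variable {G H : SimpleGraph V} {u v x y : V}

lemma Reachable.of_forall_adj (h : ∀ a b, G.Adj a b → H.Reachable a b)
    (hxy : G.Reachable x y) : H.Reachable x y := by
  obtain ⟨p⟩ := hxy
  induction p with
  | nil => rfl
  | cons ha _ ih => exact (h _ _ ha).trans ih

lemma card_connectedComponent_le_of_reachable_imp [Finite V]
    (h : ∀ a b, G.Reachable a b → H.Reachable a b) :
    Nat.card H.ConnectedComponent ≤ Nat.card G.ConnectedComponent :=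
  Nat.card_le_card_of_surjective
    (ConnectedComponent.lift H.connectedComponentMk fun a b p _ =>
      ConnectedComponent.sound (h a b ⟨p⟩))
    fun c => c.ind fun a => ⟨G.connectedComponentMk a, rfl⟩

lemma card_connectedComponent_eq_of_reachable_eq [Finite V] (h : G.Reachable = H.Reachable) :
    Nat.card G.ConnectedComponent = Nat.card H.ConnectedComponent :=
  le_antisymm (card_connectedComponent_le_of_reachable_imp fun _ _ => h ▸ id)
    (card_connectedComponent_le_of_reachable_imp fun _ _ => h ▸ id)

lemma card_connectedComponent_bot [Finite V] :
    Nat.card (⊥ : SimpleGraph V).ConnectedComponent = Nat.card V :=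
  Nat.card_congr <| .symm <| .ofBijective _
    ⟨fun _ _ hab => reachable_bot.mp (ConnectedComponent.exact hab),
      fun c => c.ind fun a => ⟨a, rfl⟩⟩

lemma Reachable.deleteEdges_or (hxy : G.Reachable x y) :
    (G.deleteEdges {s(u, v)}).Reachable x y ∨
      ((G.deleteEdges {s(u, v)}).Reachable x u ∧ (G.deleteEdges {s(u, v)}).Reachable y v) ∨
      ((G.deleteEdges {s(u, v)}).Reachable x v ∧ (G.deleteEdges {s(u, v)}).Reachable y u) := by
  obtain ⟨p⟩ := hxy
  induction p with
  | nil => exact .inl .rfl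
  | @cons a b c hab _ ih =>
    by_cases he : s(a, b) = s(u, v)
    · obtain ⟨rfl, rfl⟩ | ⟨rfl, rfl⟩ := Sym2.eq_iff.mp he
      · rcases ih with h | ⟨h₁, h₂⟩ | ⟨-, h⟩
        exacts [.inr (.inl ⟨.rfl, h.symm⟩), .inl (h₁.symm.trans h₂.symm), .inl h.symm]
      · rcases ih with h | ⟨-, h⟩ | ⟨h₁, h₂⟩
        exacts [.inr (.inr ⟨.rfl, h.symm⟩), .inl h.symm, .inl (h₁.symm.trans h₂.symm)]
    · have hab' : (G.deleteEdges {s(u, v)}).Adj a b := by simp [hab, he]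
      rcases ih with h | ⟨h₁, h₂⟩ | ⟨h₁, h₂⟩
      exacts [.inl (hab'.reachable.trans h), .inr (.inl ⟨hab'.reachable.trans h₁, h₂⟩),
        .inr (.inr ⟨hab'.reachable.trans h₁, h₂⟩)]

lemma card_connectedComponent_deleteEdges_le [Finite V] (u v : V) :
    Nat.card (G.deleteEdges {s(u, v)}).ConnectedComponent ≤
      Nat.card G.ConnectedComponent + 1 := by
  set G' := G.deleteEdges {s(u, v)}
  let f (c : G'.ConnectedComponent) : Option G.ConnectedComponent :=
    if c = G'.connectedComponentMk v then none else some (c.map (Hom.ofLE (deleteEdges_le _)))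
  refine (Nat.card_le_card_of_injective f fun c d hcd => ?_).trans_eq Finite.card_option
  induction c, d using ConnectedComponent.ind₂ with | h x y => ?_
  by_cases hx : G'.connectedComponentMk x = G'.connectedComponentMk v <;>
    by_cases hy : G'.connectedComponentMk y = G'.connectedComponentMk v <;>
    simp only [f, hx, hy, if_true, if_false, reduceCtorEq, Option.some.injEq] at hcd
  · rw [hx, hy]
  rcases (ConnectedComponent.exact hcd).deleteEdges_or (u := u) (v := v) with
    h | ⟨-, h⟩ | ⟨h, -⟩
  exacts [ConnectedComponent.sound h, (hy (ConnectedComponent.sound h)).elim,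
    (hx (ConnectedComponent.sound h)).elim]

lemma card_connectedComponent_lt_deleteEdges [Finite V] (hadj : G.Adj u v)
    (hbr : G.IsBridge s(u, v)) :
    Nat.card G.ConnectedComponent < Nat.card (G.deleteEdges {s(u, v)}).ConnectedComponent := by
  have := Fintype.ofFinite G.ConnectedComponent
  have := Fintype.ofFinite (G.deleteEdges {s(u, v)}).ConnectedComponent
  simp only [Nat.card_eq_fintype_card]
  refine Fintype.card_lt_of_surjective_not_injective _
    (ConnectedComponent.surjective_map_ofLE (deleteEdges_le _)) fun hinj => hbr ?_
  refine ConnectedComponent.exact (hinj ?_)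
  simpa using ConnectedComponent.sound hadj.reachable

lemma IsAcyclic.card_edgeSet_add_card_connectedComponent [Finite V] (hG : G.IsAcyclic) :
    Nat.card G.edgeSet + Nat.card G.ConnectedComponent = Nat.card V := by
  induction hn : Nat.card G.edgeSet generalizing G with
  | zero =>
    have : G = ⊥ := by
      rw [← edgeSet_eq_empty, ← Set.isEmpty_coe_sort, ← Finite.card_eq_zero_iff, hn]
    subst this
    simpa using card_connectedComponent_bot
  | succ n ih =>
    obtain ⟨⟨e, he⟩⟩ : Nonempty G.edgeSet := (Nat.card_pos_iff.mp (by omega)).1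
    induction e using Sym2.ind with | h u v => ?_
    have hadj : G.Adj u v := he
    have hcard : Nat.card (G.deleteEdges {s(u, v)}).edgeSet = n := by
      rw [edgeSet_deleteEdges, Nat.card_coe_set_eq, Set.ncard_sdiff_singleton_of_mem he,
        ← Nat.card_coe_set_eq, hn, Nat.add_sub_cancel]
    have := ih (hG.anti (deleteEdges_le _)) hcard
    have := card_connectedComponent_deleteEdges_le (G := G) u v
    have := card_connectedComponent_lt_deleteEdges hadj
      (isAcyclic_iff_forall_adj_isBridge.mp hG hadj)
    omega

lemma card_le_card_edgeSet_add_card_connectedComponent [Finite V] (G : SimpleGraph V) :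
    Nat.card V ≤ Nat.card G.edgeSet + Nat.card G.ConnectedComponent := by
  obtain ⟨F, hle, hF, hreach⟩ := G.exists_isAcyclic_reachable_eq_le
  rw [← hF.card_edgeSet_add_card_connectedComponent,
    card_connectedComponent_eq_of_reachable_eq hreach]
  exact Nat.add_le_add_right (Nat.card_mono (Set.toFinite _) (edgeSet_mono hle)) _

lemma card_edgeSet_fromEdgeSet_le (S : Finset (Sym2 V)) :
    Nat.card (fromEdgeSet (S : Set (Sym2 V))).edgeSet ≤ S.card := by
  rw [edgeSet_fromEdgeSet]
  exact (Nat.card_mono S.finite_toSet Set.sdiff_subset).trans_eq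
    (by rw [Nat.card_coe_set_eq, Set.ncard_coe_finset])

lemma sum_card_supp_connectedComponent [Fintype V] (G : SimpleGraph V) :
    ∑ c : G.ConnectedComponent, Nat.card c.supp = Nat.card V := by
  rw [← Nat.card_sigma]
  exact Nat.card_congr (Equiv.sigmaFiberEquiv G.connectedComponentMk)

end SimpleGraph

open SimpleGraph

section Coloring

variable {G : SimpleGraph V} {φ : V → Fin 2}

lemma badGraph_le : badGraph G φ ≤ G := fun _ _ h => h.1

lemma eq_of_reachable_badGraph {u v : V} (h : (badGraph G φ).Reachable u v) : φ u = φ v := by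
  obtain ⟨p⟩ := h
  induction p with
  | nil => rfl
  | cons hab _ ih => exact hab.2.trans ih

lemma reachable_induce_of_reachable_badGraph {i : Fin 2} {u v : V}
    (h : (badGraph G φ).Reachable u v) (hu : φ u = i) :
    (G.induce (φ ⁻¹' {i})).Reachable ⟨u, hu⟩
      ⟨v, (eq_of_reachable_badGraph h).symm.trans hu⟩ := by
  obtain ⟨p⟩ := h
  induction p with
  | nil => rfl
  | cons hab _ ih =>
    have hadj : (G.induce (φ ⁻¹' {i})).Adj ⟨_, hu⟩ ⟨_, hab.2.symm.trans hu⟩ := hab.1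
    exact hadj.reachable.trans (ih _)

def colorClassHom (G : SimpleGraph V) (φ : V → Fin 2) (i : Fin 2) :
    G.induce (φ ⁻¹' {i}) →g badGraph G φ where
  toFun := Subtype.val
  map_rel' {a b} h := ⟨h, a.2.trans b.2.symm⟩

lemma image_val_supp_induce_eq_supp_badGraph {i : Fin 2} (w : φ ⁻¹' {i}) :
    Subtype.val '' ((G.induce (φ ⁻¹' {i})).connectedComponentMk w).supp =
      ((badGraph G φ).connectedComponentMk w).supp := by
  ext x
  simp only [Set.mem_image, ConnectedComponent.mem_supp_iff, ConnectedComponent.eq]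
  constructor
  · rintro ⟨y, hy, rfl⟩
    exact hy.map (colorClassHom G φ i)
  · intro hx
    exact ⟨_, reachable_induce_of_reachable_badGraph hx
      ((eq_of_reachable_badGraph hx).trans w.2), rfl⟩

lemma setOf_isMonochromaticComponent :
    {X | IsMonochromaticComponent G φ X} =
      Set.range (ConnectedComponent.supp (G := badGraph G φ)) := by
  ext X
  constructor
  · rintro ⟨i, c, rfl⟩
    induction c using ConnectedComponent.ind with | h w => ?_
    exact ⟨_, (image_val_supp_induce_eq_supp_badGraph w).symm⟩
  · rintro ⟨c, rfl⟩
    induction c using ConnectedComponent.ind with | h v => ?_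
    exact ⟨φ v, _, (image_val_supp_induce_eq_supp_badGraph (i := φ v) ⟨v, rfl⟩).symm⟩

lemma cost_add_card_connectedComponent_badGraph [Fintype V] (G : SimpleGraph V)
    (φ : V → Fin 2) : cost G φ + Nat.card (badGraph G φ).ConnectedComponent = Nat.card V := by
  rw [cost, setOf_isMonochromaticComponent, finsum_mem_range ConnectedComponent.supp_injective,
    finsum_eq_sum_of_fintype, ← sum_card_supp_connectedComponent (badGraph G φ),
    Nat.card_eq_fintype_card (α := (badGraph G φ).ConnectedComponent), Fintype.card_eq_sum_ones,
    ← Finset.sum_add_distrib]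
  refine Finset.sum_congr rfl fun c _ => Nat.sub_add_cancel ?_
  have := c.nonempty_supp.to_subtype
  exact Nat.card_pos

lemma contractEdges_colorable_of_reachable_eq {S : Set (Sym2 V)}
    (hS : (fromEdgeSet S).Reachable = (badGraph G φ).Reachable) :
    (contractEdges G S).Colorable 2 := by
  have hiff (u v : V) : (fromEdgeSet S).Reachable u v ↔ (badGraph G φ).Reachable u v := by
    rw [hS]
  refine ⟨Coloring.mk (ConnectedComponent.lift φ fun u v p _ =>
    eq_of_reachable_badGraph ((hiff u v).mp p.reachable)) ?_⟩
  rintro _ _ ⟨hne, u, v, huv, rfl, rfl⟩ hφ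
  exact hne (ConnectedComponent.sound ((hiff u v).mpr (Adj.reachable ⟨huv, hφ⟩)))

lemma reachable_fromEdgeSet_of_reachable_badGraph {S : Set (Sym2 V)}
    (C : (contractEdges G S).Coloring (Fin 2)) {u v : V}
    (h : (badGraph G fun w => C ((fromEdgeSet S).connectedComponentMk w)).Reachable u v) :
    (fromEdgeSet S).Reachable u v :=
  h.of_forall_adj fun a b (hab : (badGraph G _).Adj a b) => by_contra fun hne =>
    C.valid ⟨fun heq => hne (ConnectedComponent.exact heq), a, b, hab.1, rfl, rfl⟩ hab.2

lemma cost_le_card_of_coloring_contractEdges [Fintype V] {S : Finset (Sym2 V)}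
    (C : (contractEdges G S).Coloring (Fin 2)) :
    cost G (fun v => C ((fromEdgeSet (S : Set (Sym2 V))).connectedComponentMk v)) ≤ S.card := by
  have hcost := cost_add_card_connectedComponent_badGraph G
    fun v => C ((fromEdgeSet (S : Set (Sym2 V))).connectedComponentMk v)
  have hcomp := card_connectedComponent_le_of_reachable_imp
    fun _ _ => reachable_fromEdgeSet_of_reachable_badGraph C
  have hrank := card_le_card_edgeSet_add_card_connectedComponent (fromEdgeSet (S : Set (Sym2 V)))
  have hedges := card_edgeSet_fromEdgeSet_le S
  omega

end Coloring

/-- A finite simple graph `G` has a 2-coloring of cost at most `k` iff there is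
a set `S` of at most `k` edges of `G` such that `G/S` is bipartite. -/
theorem stmt0 {V : Type*} [Fintype V] (G : SimpleGraph V) (k : ℕ) :
    (∃ φ : V → Fin 2, cost G φ ≤ k) ↔
    ∃ S : Finset (Sym2 V), ↑S ⊆ G.edgeSet ∧ S.card ≤ k ∧
      (contractEdges G ↑S).Colorable 2 := by
  constructor
  · rintro ⟨φ, hφ⟩
    obtain ⟨F, hle, hF, hreach⟩ := (badGraph G φ).exists_isAcyclic_reachable_eq_le
    have hcost := cost_add_card_connectedComponent_badGraph G φ
    have hforest := hF.card_edgeSet_add_card_connectedComponent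
    have hcomp := card_connectedComponent_eq_of_reachable_eq hreach
    refine ⟨F.edgeFinset, ?_, ?_, ?_⟩
    · rw [coe_edgeFinset]
      exact edgeSet_mono (hle.trans badGraph_le)
    · rw [edgeFinset_card, ← Nat.card_eq_fintype_card]
      omega
    · rw [coe_edgeFinset]
      exact contractEdges_colorable_of_reachable_eq (by rwa [fromEdgeSet_edgeSet])
  · rintro ⟨S, -, hS, ⟨C⟩⟩
    exact ⟨_, (cost_le_card_of_coloring_contractEdges C).trans hS⟩
end

section
/- Let G be a finite simple bipartite graph, let T1, T2 be disjoint subsets of V(G), and let uv be an edge of G. If φ is a cheapest (T1,T2)-extension of G − uv and u and v lie in the same good component of φ, then φ (regarded as a 2-coloring of G) is a cheapest (T1,T2)-extension of G, its cost in G equals its cost in G − uv, and consequently for every natural number k, G has a (T1,T2)-extension of cost at most k if and only if G − uv has a (T1,T2)-extension of cost at most k. -/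
open scoped Classical

variable {V : Type*}

/-!
The monochromatic components of `φ` are exactly the connected components of the graph of bad
edges, so the cost of `φ` is `|V|` minus the number of those components; in particular it can
only grow when edges are added. Both `φ` and a bipartition of `G` properly 2-color the graph of
good edges, hence on each good component they agree up to swapping the colors. As the
bipartition separates the adjacent vertices `u` and `v`, so does `φ`: the edge `uv` is good, and
putting it back leaves the bad graph, hence the cost of `φ`, unchanged.
-/

open SimpleGraph

namespace SimpleGraph

variable {W : Type*}

lemma finsum_card_supp_sub_one_add_card [Finite W] (K : SimpleGraph W) :
    ∑ᶠ c : K.ConnectedComponent, (Nat.card c.supp - 1) + Nat.card K.ConnectedComponent =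
      Nat.card W := by
  cases nonempty_fintype W
  have hsupp : ∑ c : K.ConnectedComponent, Nat.card c.supp = Nat.card W := by
    rw [← Nat.card_sigma, ← Nat.card_congr (Equiv.sigmaFiberEquiv K.connectedComponentMk)]
    exact Nat.card_congr (Equiv.sigmaCongrRight fun c =>
      Equiv.subtypeEquivRight fun x => ConnectedComponent.mem_supp_iff c x)
  rw [finsum_eq_sum_of_fintype, Nat.card_eq_fintype_card (α := K.ConnectedComponent),
    ← Finset.card_univ, Finset.card_eq_sum_ones, ← Finset.sum_add_distrib, ← hsupp]
  refine Finset.sum_congr rfl fun c _ => ?_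
  have := c.nonempty_supp.to_subtype
  exact Nat.sub_add_cancel Nat.card_pos

lemma finsum_card_supp_sub_one_mono [Finite W] {K K' : SimpleGraph W} (h : K ≤ K') :
    ∑ᶠ c : K.ConnectedComponent, (Nat.card c.supp - 1) ≤
      ∑ᶠ c : K'.ConnectedComponent, (Nat.card c.supp - 1) := by
  have hK := finsum_card_supp_sub_one_add_card K
  have hK' := finsum_card_supp_sub_one_add_card K'
  have := ConnectedComponent.card_le_card_of_le h
  omega

lemma Coloring.eq_iff_eq_of_reachable {K : SimpleGraph W} (c d : K.Coloring (Fin 2)) {a b : W}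
    (h : K.Reachable a b) : c a = c b ↔ d a = d b := by
  obtain ⟨w⟩ := h
  induction w with
  | nil => simp
  | cons hadj _ ih =>
    have flip : ∀ x y z : Fin 2, x ≠ y → (x = z ↔ ¬ y = z) := by decide
    rw [flip _ _ _ (c.valid hadj), flip _ _ _ (d.valid hadj), ih]

end SimpleGraph

lemma goodGraph_le (G : SimpleGraph V) (φ : V → Fin 2) : goodGraph G φ ≤ G :=
  fun _ _ h => h.1

lemma badGraph_mono {G G' : SimpleGraph V} (h : G ≤ G') (φ : V → Fin 2) :
    badGraph G φ ≤ badGraph G' φ :=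
  fun _ _ hab => ⟨h hab.1, hab.2⟩

lemma badGraph_deleteEdges_of_ne (G : SimpleGraph V) {φ : V → Fin 2} {u v : V}
    (hne : φ u ≠ φ v) : badGraph (G.deleteEdges {s(u, v)}) φ = badGraph G φ := by
  ext a b
  refine ⟨fun h => ⟨h.1.1, h.2⟩, fun h => ⟨(deleteEdges_adj ..).mpr ⟨h.1, ?_⟩, h.2⟩⟩
  intro heq
  rcases Sym2.eq_iff.mp (Set.mem_singleton_iff.mp heq) with ⟨rfl, rfl⟩ | ⟨rfl, rfl⟩
  · exact hne h.2
  · exact hne h.2.symm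

lemma reachable_induce_of_walk_badGraph (G : SimpleGraph V) (φ : V → Fin 2) {a b : V}
    {i : Fin 2} (w : (badGraph G φ).Walk a b) (ha : φ a = i) :
    ∃ hb : φ b = i, (G.induce (φ ⁻¹' {i})).Reachable ⟨a, ha⟩ ⟨b, hb⟩ := by
  induction w with
  | nil => exact ⟨ha, .refl _⟩
  | cons h _ ih =>
    obtain ⟨hb, hreach⟩ := ih (h.2.symm.trans ha)
    exact ⟨hb, (Adj.reachable (induce_adj.mpr h.1)).trans hreach⟩

lemma image_supp_induce_eq_supp_badGraph (G : SimpleGraph V) (φ : V → Fin 2) {i : Fin 2}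
    {x : V} (hx : φ x = i) :
    Subtype.val '' ((G.induce (φ ⁻¹' {i})).connectedComponentMk ⟨x, hx⟩).supp =
      ((badGraph G φ).connectedComponentMk x).supp := by
  let toBad : G.induce (φ ⁻¹' {i}) →g badGraph G φ :=
    ⟨Subtype.val, fun {a b} h => ⟨h, a.2.trans b.2.symm⟩⟩
  ext y
  simp only [Set.mem_image, ConnectedComponent.mem_supp_iff, ConnectedComponent.eq]
  constructor
  · rintro ⟨y, hy, rfl⟩
    exact hy.map toBad
  · rintro ⟨w⟩
    obtain ⟨hy, hreach⟩ := reachable_induce_of_walk_badGraph G φ w.reverse hx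
    exact ⟨⟨y, hy⟩, hreach.symm, rfl⟩

lemma setOf_isMonochromaticComponent_eq_range (G : SimpleGraph V) (φ : V → Fin 2) :
    {X | IsMonochromaticComponent G φ X} =
      Set.range fun c : (badGraph G φ).ConnectedComponent => c.supp := by
  ext X
  constructor
  · rintro ⟨i, c, rfl⟩
    induction c using ConnectedComponent.ind with
    | h x => exact ⟨_, (image_supp_induce_eq_supp_badGraph G φ x.2).symm⟩
  · rintro ⟨c, rfl⟩
    induction c using ConnectedComponent.ind with
    | h x => exact ⟨φ x, _, (image_supp_induce_eq_supp_badGraph G φ rfl).symm⟩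

lemma cost_eq_finsum_badGraph (G : SimpleGraph V) (φ : V → Fin 2) :
    cost G φ = ∑ᶠ c : (badGraph G φ).ConnectedComponent, (Nat.card c.supp - 1) := by
  rw [cost, setOf_isMonochromaticComponent_eq_range,
    finsum_mem_range ConnectedComponent.supp_injective]

lemma cost_mono [Finite V] {G G' : SimpleGraph V} (h : G ≤ G') (φ : V → Fin 2) :
    cost G φ ≤ cost G' φ := by
  simpa only [cost_eq_finsum_badGraph] using finsum_card_supp_sub_one_mono (badGraph_mono h φ)

lemma cost_deleteEdges_of_ne (G : SimpleGraph V) {φ : V → Fin 2} {u v : V}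
    (hne : φ u ≠ φ v) : cost (G.deleteEdges {s(u, v)}) φ = cost G φ := by
  rw [cost_eq_finsum_badGraph, cost_eq_finsum_badGraph, badGraph_deleteEdges_of_ne G hne]

theorem stmt3_general {V : Type*} [Fintype V] (G : SimpleGraph V) (hbip : G.Colorable 2)
    (T1 T2 : Set V) (u v : V) (huv : G.Adj u v)
    (φ : V → Fin 2)
    (hcheap : IsCheapestExtension (G.deleteEdges {s(u, v)}) φ T1 T2)
    (hsame : ∃ X : Set V, IsGoodComponent (G.deleteEdges {s(u, v)}) φ X ∧ u ∈ X ∧ v ∈ X) :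
    IsCheapestExtension G φ T1 T2 ∧
    cost G φ = cost (G.deleteEdges {s(u, v)}) φ ∧
    ∀ k : ℕ,
      (∃ ψ : V → Fin 2, IsExtension ψ T1 T2 ∧ cost G ψ ≤ k) ↔
      (∃ ψ : V → Fin 2, IsExtension ψ T1 T2 ∧ cost (G.deleteEdges {s(u, v)}) ψ ≤ k) := by
  set G' := G.deleteEdges {s(u, v)}
  obtain ⟨col⟩ := hbip
  have hne : φ u ≠ φ v := by
    obtain ⟨X, ⟨C, rfl⟩, hu, hv⟩ := hsame
    have hreach : (goodGraph G' φ).Reachable u v := ConnectedComponent.exact (hu.trans hv.symm)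
    let byφ : (goodGraph G' φ).Coloring (Fin 2) := Coloring.mk φ fun h => h.2
    let byCol : (goodGraph G' φ).Coloring (Fin 2) :=
      col.comp (Hom.ofLE ((goodGraph_le G' φ).trans (G.deleteEdges_le _)))
    exact (Coloring.eq_iff_eq_of_reachable byφ byCol hreach).not.mpr (col.valid huv)
  have hcost : cost G φ = cost G' φ := (cost_deleteEdges_of_ne G hne).symm
  have hle : ∀ ψ, cost G' ψ ≤ cost G ψ := cost_mono (G.deleteEdges_le _)
  refine ⟨⟨hcheap.1, fun ψ hψ => ?_⟩, hcost, fun k => ⟨?_, ?_⟩⟩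
  · exact hcost ▸ (hcheap.2 ψ hψ).trans (hle ψ)
  · rintro ⟨ψ, hψ, hk⟩
    exact ⟨ψ, hψ, (hle ψ).trans hk⟩
  · rintro ⟨ψ, hψ, hk⟩
    exact ⟨φ, hcheap.1, hcost ▸ (hcheap.2 ψ hψ).trans hk⟩

/-- if `φ` is a cheapest `(T₁,T₂)`-extension of `G - uv` and `u`, `v` lie in
the same good component of `φ`, then `φ` is a cheapest `(T₁,T₂)`-extension of `G`, its cost
in `G` equals its cost in `G - uv`, and for every `k`, `G` has a `(T₁,T₂)`-extension of cost
at most `k` iff `G - uv` does. -/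
theorem stmt3 {V : Type*} [Fintype V] (G : SimpleGraph V) (hbip : G.Colorable 2)
    (T1 T2 : Set V) (hdisj : Disjoint T1 T2) (u v : V) (huv : G.Adj u v)
    (φ : V → Fin 2)
    (hcheap : IsCheapestExtension (G.deleteEdges {s(u, v)}) φ T1 T2)
    (hsame : ∃ X : Set V, IsGoodComponent (G.deleteEdges {s(u, v)}) φ X ∧ u ∈ X ∧ v ∈ X) :
    IsCheapestExtension G φ T1 T2 ∧
    cost G φ = cost (G.deleteEdges {s(u, v)}) φ ∧
    ∀ k : ℕ,
      (∃ ψ : V → Fin 2, IsExtension ψ T1 T2 ∧ cost G ψ ≤ k) ↔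
      (∃ ψ : V → Fin 2, IsExtension ψ T1 T2 ∧ cost (G.deleteEdges {s(u, v)}) ψ ≤ k) :=
  stmt3_general G hbip T1 T2 u v huv φ hcheap hsame
end

section
/- Let G be a finite simple graph, let Y ⊆ V(G) be a well-connected set in G, let uv be an edge of G, let k ≥ 1 be a natural number, and let φ be a 2-coloring of G − uv of cost at most k. Then every good component C of φ (in G − uv) satisfies |Y ∩ C| ≤ 2k² or |Y \ C| ≤ 2k². -/
open scoped Classical

variable {V : Type*}

/-!
If both `Y ∩ C` and `Y \ C` had more than `2k²` vertices, well-connectedness of `Y` would give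
`k + 2` vertex-disjoint paths from `Y ∩ C` to `Y \ C`. Each path leaves `C` along an edge of `G`
which is either `uv` or, since good edges never leave a good component, a bad edge of `G - uv`.
At most one path passes through `u`, so the other `k + 1` paths contain `2k + 2` distinct
endpoints of bad edges. But a monochromatic component `X` contains at most `|X| ≤ 2(|X| - 1)`
such endpoints, so there are at most `2 · cost ≤ 2k` of them.
-/

open Finset Function in
theorem two_mul_card_sub_one_le_of_pairwise_disjoint {ι α : Type*} [Fintype ι] [DecidableEq α]
    {S : ι → Finset α} (hS : Pairwise (Disjoint on S)) (M : Finset α) (x : α)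
    (h : ∀ i, x ∉ S i → 2 ≤ #(M ∩ S i)) : 2 * (Fintype.card ι - 1) ≤ #M := by
  set J := univ.filter fun i => x ∉ S i
  have hthrough : #(univ.filter fun i => x ∈ S i) ≤ 1 :=
    card_le_one.2 fun i hi j hj => by_contra fun hij =>
      disjoint_left.1 (hS hij) (mem_filter.1 hi).2 (mem_filter.1 hj).2
  have hJ : Fintype.card ι - 1 ≤ #J := by
    have := card_filter_add_card_filter_not (s := univ) fun i => x ∈ S i
    rw [card_univ] at this
    change _ + #J = _ at this
    omega
  calc 2 * (Fintype.card ι - 1) ≤ ∑ _i ∈ J, 2 := by rw [sum_const, smul_eq_mul]; omega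
    _ ≤ ∑ i ∈ J, #(M ∩ S i) := sum_le_sum fun i hi => h i (mem_filter.1 hi).2
    _ = #(J.biUnion fun i => M ∩ S i) :=
        (card_biUnion fun i _ j _ hij => (hS hij).mono inter_subset_right inter_subset_right).symm
    _ ≤ #M := card_le_card (biUnion_subset.2 fun _ _ => inter_subset_left)

open Function in
theorem PConnected.two_mul_sub_one_le_ncard_support [Fintype V] {G H : SimpleGraph V} {p : ℕ}
    {Y : Set V} (hY : PConnected G p Y) {C : Set V} {x : V}
    (hcross : ∀ a b (w : G.Walk a b), a ∈ C → b ∉ C → x ∉ w.support →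
      ∃ c d, H.Adj c d ∧ c ∈ w.support ∧ d ∈ w.support)
    {n : ℕ} (hnp : n ≤ p) (hn₁ : n ≤ (Y ∩ C).ncard) (hn₂ : n ≤ (Y \ C).ncard) :
    2 * (n - 1) ≤ H.support.ncard := by
  rw [Set.ncard_eq_toFinset_card'] at hn₁ hn₂ ⊢
  obtain ⟨X₁, hX₁, rfl⟩ := Finset.exists_subset_card_eq hn₁
  obtain ⟨X₂, hX₂, hcard⟩ := Finset.exists_subset_card_eq hn₂
  simp only [Finset.subset_iff, Set.mem_toFinset] at hX₁ hX₂
  obtain ⟨a, b, w, -, ha, hb, hdisj⟩ :=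
    hY.2 X₁ X₂ (fun y hy => (hX₁ hy).1) (fun y hy => (hX₂ hy).1) hcard.symm hnp
  have hS : Pairwise (Disjoint on fun i => (w i).support.toFinset) := fun i j hij =>
    Finset.disjoint_left.2 fun y hi hj => hdisj i j hij y (List.mem_toFinset.1 hi)
      (List.mem_toFinset.1 hj)
  simpa using two_mul_card_sub_one_le_of_pairwise_disjoint hS H.support.toFinset x
    fun i hx => by
      obtain ⟨c, d, hcd, hc, hd⟩ :=
        hcross _ _ (w i) (hX₁ (ha i)).2 (hX₂ (hb i)).2 (by simpa using hx)
      exact Finset.one_lt_card.2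
        ⟨c, Finset.mem_inter.2 ⟨Set.mem_toFinset.2 ⟨d, hcd⟩, List.mem_toFinset.2 hc⟩,
          d, Finset.mem_inter.2 ⟨Set.mem_toFinset.2 ⟨c, hcd.symm⟩, List.mem_toFinset.2 hd⟩,
          hcd.ne⟩

theorem IsGoodComponent.badGraph_adj {G : SimpleGraph V} {φ : V → Fin 2} {C : Set V}
    (hC : IsGoodComponent G φ C) {c d : V} (hcd : G.Adj c d) (hc : c ∈ C) (hd : d ∉ C) :
    (badGraph G φ).Adj c d := by
  obtain ⟨K, rfl⟩ := hC
  refine ⟨hcd, by_contra fun hne => hd ?_⟩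
  have hgood : (goodGraph G φ).Adj d c := ⟨hcd.symm, Ne.symm hne⟩
  exact (SimpleGraph.ConnectedComponent.sound hgood.reachable).trans hc

theorem IsGoodComponent.exists_badGraph_adj_mem_support {G : SimpleGraph V} {φ : V → Fin 2}
    {u v : V} {C : Set V} (hC : IsGoodComponent (G.deleteEdges {s(u, v)}) φ C) {a b : V}
    (w : G.Walk a b) (ha : a ∈ C) (hb : b ∉ C) (hu : u ∉ w.support) :
    ∃ c d, (badGraph (G.deleteEdges {s(u, v)}) φ).Adj c d ∧ c ∈ w.support ∧ d ∈ w.support := by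
  obtain ⟨d, hd, hd₁, hd₂⟩ := w.exists_boundary_dart C ha hb
  have hfst := w.dart_fst_mem_support_of_mem_darts hd
  have hsnd := w.dart_snd_mem_support_of_mem_darts hd
  have hne : s(d.fst, d.snd) ≠ s(u, v) := by
    intro h
    rcases Sym2.eq_iff.1 h with ⟨rfl, -⟩ | ⟨-, rfl⟩
    exacts [hu hfst, hu hsnd]
  have hadj : (G.deleteEdges {s(u, v)}).Adj d.fst d.snd :=
    (SimpleGraph.deleteEdges_adj ..).2 ⟨d.adj, hne⟩
  exact ⟨d.fst, d.snd, hC.badGraph_adj hadj hd₁ hd₂, hfst, hsnd⟩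

theorem IsMonochromaticComponent.exists_of_badGraph_adj {G : SimpleGraph V} {φ : V → Fin 2}
    {x y : V} (h : (badGraph G φ).Adj x y) :
    ∃ X, IsMonochromaticComponent G φ X ∧ x ∈ X ∧ y ∈ X := by
  obtain ⟨hxy, hφ⟩ := h
  let K := G.induce (φ ⁻¹' {φ x})
  have hx : x ∈ φ ⁻¹' {φ x} := rfl
  have hy : y ∈ φ ⁻¹' {φ x} := hφ.symm
  have hK : K.Adj ⟨y, hy⟩ ⟨x, hx⟩ := hxy.symm
  exact ⟨_, ⟨φ x, K.connectedComponentMk ⟨x, hx⟩, rfl⟩, ⟨⟨x, hx⟩, rfl, rfl⟩,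
    ⟨⟨y, hy⟩, SimpleGraph.ConnectedComponent.sound hK.reachable, rfl⟩⟩

theorem ncard_support_badGraph_le_two_mul_cost [Finite V] (G : SimpleGraph V) (φ : V → Fin 2) :
    (badGraph G φ).support.ncard ≤ 2 * cost G φ := by
  have hS := Set.toFinite {X : Set V | IsMonochromaticComponent G φ X}
  set T := hS.toFinset.filter fun X => 2 ≤ X.ncard
  have hsub : (badGraph G φ).support ⊆ ⋃ X ∈ T, X := by
    rintro x ⟨y, hxy⟩
    obtain ⟨X, hX, hx, hy⟩ := IsMonochromaticComponent.exists_of_badGraph_adj hxy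
    have hX₂ : 1 < X.ncard := (Set.one_lt_ncard X.toFinite).2 ⟨x, hx, y, hy, hxy.1.ne⟩
    exact Set.mem_biUnion (Finset.mem_filter.2 ⟨hS.mem_toFinset.2 hX, hX₂⟩) hx
  calc (badGraph G φ).support.ncard ≤ ∑ X ∈ T, X.ncard :=
        (Set.ncard_le_ncard hsub).trans (T.set_ncard_biUnion_le id)
    _ ≤ ∑ X ∈ T, 2 * (Nat.card X - 1) := Finset.sum_le_sum fun X hX => by
        have := (Finset.mem_filter.1 hX).2
        rw [Nat.card_coe_set_eq]
        omega
    _ ≤ ∑ X ∈ hS.toFinset, 2 * (Nat.card X - 1) :=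
        Finset.sum_le_sum_of_subset (Finset.filter_subset _ _)
    _ = 2 * cost G φ := by
        rw [← Finset.mul_sum, cost, ← finsum_mem_coe_finset, hS.coe_toFinset]

theorem stmt7_general {V : Type*} [Fintype V] (G : SimpleGraph V) (Y : Set V)
    (hY : WellConnected G Y) (u v : V) (k : ℕ) (hk : 1 ≤ k)
    (φ : V → Fin 2) (hcost : cost (G.deleteEdges {s(u, v)}) φ ≤ k) :
    ∀ C : Set V, IsGoodComponent (G.deleteEdges {s(u, v)}) φ C →
      Nat.card (Y ∩ C : Set V) ≤ 2 * k ^ 2 ∨ Nat.card (Y \ C : Set V) ≤ 2 * k ^ 2 := by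
  intro C hC
  by_contra! hbig
  simp only [Nat.card_coe_set_eq] at hbig
  have hk₂ : k + 2 ≤ 2 * k ^ 2 + 1 := by nlinarith
  have hhalf : k + 2 ≤ Nat.card Y / 2 := by
    rw [Nat.card_coe_set_eq, ← Set.ncard_inter_add_ncard_sdiff_eq_ncard Y C]
    omega
  have hpaths := hY.two_mul_sub_one_le_ncard_support
    (fun _ _ => hC.exists_badGraph_adj_mem_support) hhalf (by omega) (by omega)
  have hbad := ncard_support_badGraph_le_two_mul_cost (G.deleteEdges {s(u, v)}) φ
  omega

/-- if `Y` is well-connected in `G`, `uv ∈ E(G)`, `k ≥ 1` and `φ` is a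
2-coloring of `G - uv` of cost at most `k`, then every good component `C` of `φ` in `G - uv`
satisfies `|Y ∩ C| ≤ 2k²` or `|Y \ C| ≤ 2k²`. -/
theorem stmt7 {V : Type*} [Fintype V] (G : SimpleGraph V) (Y : Set V)
    (hY : WellConnected G Y) (u v : V) (huv : G.Adj u v) (k : ℕ) (hk : 1 ≤ k)
    (φ : V → Fin 2) (hcost : cost (G.deleteEdges {s(u, v)}) φ ≤ k) :
    ∀ C : Set V, IsGoodComponent (G.deleteEdges {s(u, v)}) φ C →
      Nat.card (Y ∩ C : Set V) ≤ 2 * k ^ 2 ∨ Nat.card (Y \ C : Set V) ≤ 2 * k ^ 2 :=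
  stmt7_general G Y hY u v k hk φ hcost
end

section
/- Let G be a finite simple graph, let T1 and T2 be disjoint subsets of V(G) with T1 ∪ T2 nonempty and |T1| + |T2| ≤ t, let k ≥ 1 and t be natural numbers, and let Y ⊆ V(G) be a well-connected set in G of size at least 2·(4k²)·t·4^(4k²) + 2. Let uv be an edge of G such that G − uv is connected, and let φ be a cheapest (T1,T2)-extension of G − uv of cost at most k. Then there exists exactly one good component C* of φ satisfying |Y \ C*| ≤ 2k², and every good component C ≠ C* of φ satisfies |Y ∩ C| ≤ 2k². -/
open scoped Classical

variable {V : Type*}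

/-! The boundary of a union `A` of good components of `φ` consists of bad edges and possibly `uv`,
and a coloring of cost at most `k` has at most `2k` vertices on bad edges. If `Y ∩ A` and `Y \ A`
both had more than `2k² ≥ k` vertices, well-connectivity of `Y` would give `2k² + 1` disjoint paths
between them, each crossing the boundary at two private vertices: too many. So no union of good
components splits `Y` evenly; as `|Y| > 6k²`, grouping small components greedily shows that one
component holds all but `2k²` vertices of `Y`. -/

lemma Set.Finite.exists_finset_subset_card_eq {α : Type*} {s : Set α} (hs : s.Finite) {n : ℕ}
    (hn : n ≤ s.ncard) : ∃ t : Finset α, ↑t ⊆ s ∧ t.card = n := by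
  obtain ⟨s, rfl⟩ := hs.exists_finset_coe
  exact Finset.exists_subset_card_eq (by simpa using hn)

section Fibers

variable {ι : Type*} (q : V → ι) {Y : Set V} {m : ℕ}

lemma exists_ncard_inter_preimage_mem_Ioc (hfib : ∀ c, (Y ∩ q ⁻¹' {c}).ncard ≤ m)
    (S : Finset ι) (hS : m < (Y ∩ q ⁻¹' S).ncard) :
    ∃ T : Set ι, (Y ∩ q ⁻¹' T).ncard ∈ Set.Ioc m (2 * m) := by
  induction S using Finset.induction_on with
  | empty => simp at hS
  | insert c S _ ih =>
    by_cases hS' : m < (Y ∩ q ⁻¹' S).ncard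
    · exact ih hS'
    refine ⟨insert c S, by simpa using hS, ?_⟩
    rw [Set.insert_eq, Set.preimage_union, Set.inter_union_distrib_left]
    have := hfib c
    have := Set.ncard_union_le (Y ∩ q ⁻¹' {c}) (Y ∩ q ⁻¹' S)
    omega

lemma ncard_inter_preimage_singleton_le_ncard_sdiff (hY : Y.Finite) {c c' : ι} (h : c' ≠ c) :
    (Y ∩ q ⁻¹' {c'}).ncard ≤ (Y \ q ⁻¹' {c}).ncard :=
  Set.ncard_le_ncard (fun _ ⟨hxY, hx⟩ => ⟨hxY, fun hx' => h (hx.symm.trans hx')⟩) hY.sdiff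

theorem exists_unique_fiber_ncard_sdiff_le [Finite ι] (hY : Y.Finite) (hYm : 3 * m < Y.ncard)
    (hsplit : ∀ S : Set ι, (Y ∩ q ⁻¹' S).ncard ≤ m ∨ (Y \ q ⁻¹' S).ncard ≤ m) :
    ∃ c, (Y \ q ⁻¹' {c}).ncard ≤ m ∧ (∀ c', (Y \ q ⁻¹' {c'}).ncard ≤ m → c' = c) ∧
      ∀ c' ≠ c, (Y ∩ q ⁻¹' {c'}).ncard ≤ m := by
  have hpart (S : Set ι) := Set.ncard_inter_add_ncard_sdiff_eq_ncard Y (q ⁻¹' S) hY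
  obtain ⟨c, hc⟩ : ∃ c, (Y \ q ⁻¹' {c}).ncard ≤ m := by
    by_cases hbig : ∃ c, m < (Y ∩ q ⁻¹' {c}).ncard
    · obtain ⟨c, hc⟩ := hbig
      exact ⟨c, (hsplit {c}).resolve_left hc.not_ge⟩
    simp only [not_exists, not_lt] at hbig
    have := Fintype.ofFinite ι
    obtain ⟨T, hT, hT'⟩ := exists_ncard_inter_preimage_mem_Ioc q hbig Finset.univ
      (by simp only [Finset.coe_univ, Set.preimage_univ, Set.inter_univ]; omega)
    have := hpart T
    have := (hsplit T).resolve_left hT.not_ge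
    omega
  refine ⟨c, hc, fun c' hc' => ?_,
    fun c' h => (ncard_inter_preimage_singleton_le_ncard_sdiff q hY h).trans hc⟩
  by_contra h
  have := ncard_inter_preimage_singleton_le_ncard_sdiff q hY h
  have := hpart {c'}
  omega

end Fibers

lemma two_mul_le_ncard_of_disjoint_walks {G : SimpleGraph V} {A B : Set V}
    (hB : B.Finite) (hAB : ∀ x y, G.Adj x y → x ∈ A → y ∉ A → x ∈ B ∧ y ∈ B)
    {n : ℕ} {a b : Fin n → V} (w : ∀ i, G.Walk (a i) (b i)) (ha : ∀ i, a i ∈ A)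
    (hb : ∀ i, b i ∉ A) (hdisj : ∀ i j, i ≠ j → ∀ x, x ∈ (w i).support → x ∉ (w j).support) :
    2 * n ≤ B.ncard := by
  choose d hd hfst hsnd using fun i => (w i).exists_boundary_dart A (ha i) (hb i)
  have hB' i := hAB _ _ (d i).adj (hfst i) (hsnd i)
  have hsame {i j : Fin n} {x : V} (hi : x ∈ (w i).support) (hj : x ∈ (w j).support) : i = j := by
    by_contra h
    exact hdisj i j h x hi hj
  let f : Fin n ⊕ Fin n → B :=
    Sum.elim (fun i => ⟨(d i).fst, (hB' i).1⟩) (fun i => ⟨(d i).snd, (hB' i).2⟩)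
  have hf : f.Injective := by
    rintro (i | i) (j | j) h <;> simp only [f, Sum.elim_inl, Sum.elim_inr, Subtype.mk.injEq] at h
    · exact congrArg _ (hsame (SimpleGraph.Walk.dart_fst_mem_support_of_mem_darts _ (hd i))
        (h ▸ SimpleGraph.Walk.dart_fst_mem_support_of_mem_darts _ (hd j)))
    · exact absurd (h ▸ hfst i) (hsnd j)
    · exact absurd (h ▸ hfst j) (hsnd i)
    · exact congrArg _ (hsame (SimpleGraph.Walk.dart_snd_mem_support_of_mem_darts _ (hd i))
        (h ▸ SimpleGraph.Walk.dart_snd_mem_support_of_mem_darts _ (hd j)))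
  have := hB.to_subtype
  simpa [Nat.card_sum, two_mul] using Nat.card_le_card_of_injective f hf

lemma exists_isMonochromaticComponent_of_badGraph_adj {H : SimpleGraph V} {φ : V → Fin 2}
    {x y : V} (h : (badGraph H φ).Adj x y) :
    ∃ X, IsMonochromaticComponent H φ X ∧ x ∈ X ∧ y ∈ X := by
  let c := (H.induce (φ ⁻¹' {φ x})).connectedComponentMk ⟨x, rfl⟩
  refine ⟨Subtype.val '' c.supp, ⟨φ x, c, rfl⟩, ⟨⟨x, rfl⟩, rfl, rfl⟩, ⟨⟨y, h.2.symm⟩, ?_, rfl⟩⟩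
  exact SimpleGraph.ConnectedComponent.connectedComponentMk_eq_of_adj
    (G := H.induce (φ ⁻¹' {φ x})) (v := ⟨y, h.2.symm⟩) (w := ⟨x, rfl⟩) h.1.symm

-- Each vertex on a bad edge lies in a monochromatic component `X` of size `≥ 2`, and then
-- `|X| ≤ 2 (|X| - 1)`.
lemma ncard_support_badGraph_le [Finite V] (H : SimpleGraph V) (φ : V → Fin 2) :
    (badGraph H φ).support.ncard ≤ 2 * cost H φ := by
  have hS : {X : Set V | IsMonochromaticComponent H φ X}.Finite := Set.toFinite _
  let F := hS.toFinset.filter (fun X => 2 ≤ X.ncard)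
  have hsupp : (badGraph H φ).support ⊆ ⋃ X ∈ F, X := by
    rintro x ⟨y, hxy⟩
    obtain ⟨X, hX, hx, hy⟩ := exists_isMonochromaticComponent_of_badGraph_adj hxy
    have h2 : 2 ≤ X.ncard := by
      rw [← Set.ncard_pair hxy.1.ne]
      exact Set.ncard_le_ncard (Set.pair_subset hx hy)
    exact Set.mem_biUnion (Finset.mem_filter.2 ⟨hS.mem_toFinset.2 hX, h2⟩) hx
  calc (badGraph H φ).support.ncard
      ≤ ∑ X ∈ F, X.ncard := (Set.ncard_le_ncard hsupp).trans (F.set_ncard_biUnion_le _)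
    _ ≤ ∑ X ∈ F, 2 * (X.ncard - 1) :=
        Finset.sum_le_sum fun X hX => by have := (Finset.mem_filter.1 hX).2; omega
    _ ≤ ∑ X ∈ hS.toFinset, 2 * (X.ncard - 1) :=
        Finset.sum_le_sum_of_subset (Finset.filter_subset _ _)
    _ = 2 * cost H φ := by
        simp only [cost, finsum_mem_eq_finite_toFinset_sum _ hS, Finset.mul_sum,
          Nat.card_coe_set_eq]

lemma badGraph_adj_of_adj_of_goodClosed {G : SimpleGraph V} {u v : V} {φ : V → Fin 2}
    {A : Set V} (hA : ∀ x ∈ A, ∀ y, (goodGraph (G.deleteEdges {s(u, v)}) φ).Adj x y → y ∈ A)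
    {x y : V} (hxy : G.Adj x y) (hx : x ∈ A) (hy : y ∉ A) :
    s(x, y) = s(u, v) ∨ (badGraph (G.deleteEdges {s(u, v)}) φ).Adj x y := by
  by_cases he : s(x, y) = s(u, v)
  · exact Or.inl he
  have hH : (G.deleteEdges {s(u, v)}).Adj x y := by
    simpa [SimpleGraph.deleteEdges_adj, hxy] using he
  exact Or.inr ⟨hH, not_not.1 fun hne => hy (hA x hx y ⟨hH, hne⟩)⟩

theorem WellConnected.ncard_inter_le_or_ncard_sdiff_le [Finite V]
    {G : SimpleGraph V} {Y : Set V} (hY : WellConnected G Y) {u v : V} {φ : V → Fin 2} {m : ℕ}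
    (hm : cost (G.deleteEdges {s(u, v)}) φ < m) {A : Set V}
    (hA : ∀ x ∈ A, ∀ y, (goodGraph (G.deleteEdges {s(u, v)}) φ).Adj x y → y ∈ A) :
    (Y ∩ A).ncard ≤ m ∨ (Y \ A).ncard ≤ m := by
  by_contra! h
  obtain ⟨X1, hX1, hX1card⟩ := (Set.toFinite (Y ∩ A)).exists_finset_subset_card_eq h.1
  obtain ⟨X2, hX2, hX2card⟩ := (Set.toFinite (Y \ A)).exists_finset_subset_card_eq h.2
  have hYcard : 2 * (m + 1) ≤ Nat.card Y := by
    rw [Nat.card_coe_set_eq, ← Set.ncard_inter_add_ncard_sdiff_eq_ncard Y A]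
    omega
  obtain ⟨a, b, w, -, ha, hb, hdisj⟩ := hY.2 X1 X2 (hX1.trans Set.inter_subset_left)
    (hX2.trans Set.sdiff_subset) (hX1card.trans hX2card.symm) (by omega)
  let B := (badGraph (G.deleteEdges {s(u, v)}) φ).support ∪ {u, v}
  have hB : ∀ x y, G.Adj x y → x ∈ A → y ∉ A → x ∈ B ∧ y ∈ B := by
    intro x y hxy hx hy
    rcases badGraph_adj_of_adj_of_goodClosed hA hxy hx hy with he | he
    · rcases Sym2.eq_iff.1 he with ⟨rfl, rfl⟩ | ⟨rfl, rfl⟩ <;> simp [B]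
    · exact ⟨Or.inl ⟨y, he⟩, Or.inl ⟨x, he.symm⟩⟩
  have hcross := two_mul_le_ncard_of_disjoint_walks (Set.toFinite B) hB w
    (fun i => (hX1 (ha i)).2) (fun i => (hX2 (hb i)).2) hdisj
  have hBcard : B.ncard ≤ 2 * cost (G.deleteEdges {s(u, v)}) φ + 2 :=
    (Set.ncard_union_le _ _).trans (add_le_add (ncard_support_badGraph_le _ _)
      ((Set.ncard_insert_le _ _).trans (by simp)))
  omega

theorem stmt8_general {V : Type*} [Fintype V] (G : SimpleGraph V) (k t : ℕ) (hk : 1 ≤ k)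
    (T1 T2 : Set V) (hne : (T1 ∪ T2).Nonempty)
    (ht : Nat.card T1 + Nat.card T2 ≤ t)
    (Y : Set V) (hY : WellConnected G Y)
    (hYcard : 2 * (4 * k ^ 2) * t * 4 ^ (4 * k ^ 2) + 2 ≤ Nat.card Y)
    (u v : V) (φ : V → Fin 2)
    (hcost : cost (G.deleteEdges {s(u, v)}) φ ≤ k) :
    ∃ C : Set V, IsGoodComponent (G.deleteEdges {s(u, v)}) φ C ∧
      Nat.card (Y \ C : Set V) ≤ 2 * k ^ 2 ∧
      (∀ C' : Set V, IsGoodComponent (G.deleteEdges {s(u, v)}) φ C' →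
        Nat.card (Y \ C' : Set V) ≤ 2 * k ^ 2 → C' = C) ∧
      (∀ C' : Set V, IsGoodComponent (G.deleteEdges {s(u, v)}) φ C' → C' ≠ C →
        Nat.card (Y ∩ C' : Set V) ≤ 2 * k ^ 2) := by
  have ht0 : 0 < t := calc
    0 < (T1 ∪ T2).ncard := (Set.ncard_pos (Set.toFinite _)).2 hne
    _ ≤ T1.ncard + T2.ncard := Set.ncard_union_le _ _
    _ ≤ t := by simpa only [Nat.card_coe_set_eq] using ht
  have hYm : 3 * (2 * k ^ 2) < Y.ncard := by
    have : 1 ≤ t * 4 ^ (4 * k ^ 2) := Nat.one_le_iff_ne_zero.2 (by positivity)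
    rw [← Nat.card_coe_set_eq]
    nlinarith
  have hm : cost (G.deleteEdges {s(u, v)}) φ < 2 * k ^ 2 := by nlinarith
  obtain ⟨c, hc, huniq, hother⟩ :=
    exists_unique_fiber_ncard_sdiff_le (goodGraph (G.deleteEdges {s(u, v)}) φ).connectedComponentMk
      (Set.toFinite Y) hYm fun S => hY.ncard_inter_le_or_ncard_sdiff_le hm fun x hx y hxy => by
        rwa [Set.mem_preimage, ← SimpleGraph.ConnectedComponent.sound hxy.reachable]
  simp only [IsGoodComponent, Nat.card_coe_set_eq]
  refine ⟨c.supp, ⟨c, rfl⟩, hc, ?_, ?_⟩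
  · rintro _ ⟨c', rfl⟩ hc'
    rw [huniq c' hc']
  · rintro _ ⟨c', rfl⟩ hne'
    exact hother c' (ne_of_apply_ne _ hne')

/-- under the stated hypotheses, there is exactly one good component `C*` of the
cheapest `(T₁,T₂)`-extension `φ` of `G - uv` with `|Y \ C*| ≤ 2k²`, and every other good
component `C` of `φ` satisfies `|Y ∩ C| ≤ 2k²`. -/
theorem stmt8 {V : Type*} [Fintype V] (G : SimpleGraph V) (k t : ℕ) (hk : 1 ≤ k)
    (T1 T2 : Set V) (hdisj : Disjoint T1 T2) (hne : (T1 ∪ T2).Nonempty)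
    (ht : Nat.card T1 + Nat.card T2 ≤ t)
    (Y : Set V) (hY : WellConnected G Y)
    (hYcard : 2 * (4 * k ^ 2) * t * 4 ^ (4 * k ^ 2) + 2 ≤ Nat.card Y)
    (u v : V) (huv : G.Adj u v) (hconn : (G.deleteEdges {s(u, v)}).Connected)
    (φ : V → Fin 2) (hcheap : IsCheapestExtension (G.deleteEdges {s(u, v)}) φ T1 T2)
    (hcost : cost (G.deleteEdges {s(u, v)}) φ ≤ k) :
    ∃ C : Set V, IsGoodComponent (G.deleteEdges {s(u, v)}) φ C ∧
      Nat.card (Y \ C : Set V) ≤ 2 * k ^ 2 ∧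
      (∀ C' : Set V, IsGoodComponent (G.deleteEdges {s(u, v)}) φ C' →
        Nat.card (Y \ C' : Set V) ≤ 2 * k ^ 2 → C' = C) ∧
      (∀ C' : Set V, IsGoodComponent (G.deleteEdges {s(u, v)}) φ C' → C' ≠ C →
        Nat.card (Y ∩ C' : Set V) ≤ 2 * k ^ 2) :=
  stmt8_general G k t hk T1 T2 hne ht Y hY hYcard u v φ hcost
end

section
/- Let G be a finite simple graph, let k and t be natural numbers, let T1 and T2 be disjoint subsets of V(G) with |T1| + |T2| ≤ t, and let Y ⊆ V(G). Let G* be the graph obtained from G by adding a new vertex y* adjacent to exactly the vertices of Y, and let Z be the union, over all x ∈ T1 ∪ T2, of all (x,y*)-important sets X in G* with d_{G*}(X) ≤ 4k². Then d_{G*}(Z) ≤ (4k²)·t·4^(4k²) (hence also d_G(Z) ≤ (4k²)·t·4^(4k²)) and |Z ∩ Y| ≤ (4k²)·t·4^(4k²). -/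
open scoped Classical

variable {V : Type*}

/-!
Every edge of `G*` leaving `Z = ⋃ X` leaves one of the important sets `X` of the union, so
`d_{G*}(Z) ≤ p · #{important sets}` with `p = 4k²`, and there are at most `t · 4^p` of those.
The edges of `G` leaving `Z` and the edges `v y*` with `v ∈ Z ∩ Y` all leave `Z` in `G*`.

The bound `4^p` on the `(x,y)`-important sets `X` with `d(X) ≤ p` is the branching argument
of Marx: the furthest minimum cut `Xs` around `x` lies inside every important set, and an
edge `uv` leaving `Xs` is either swallowed (`v ∈ X`: the minimum cut grows) or cut (`v ∉ X`:
`p` drops once `uv` is deleted). In both branches `2p - λ` decreases, where `λ` is the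
least `d(X)` over connected `X` containing the current seed set and avoiding `y`.
-/

open SimpleGraph

lemma Set.ncard_biUnion_le_ncard_mul {ι α : Type*} {t : Set ι} (ht : t.Finite)
    {s : ι → Set α} {m : ℕ} (hs : ∀ i ∈ t, (s i).ncard ≤ m) :
    (⋃ i ∈ t, s i).ncard ≤ t.ncard * m :=
  calc (⋃ i ∈ t, s i).ncard ≤ ∑ i ∈ ht.toFinset, (s i).ncard := by
        simpa using ht.toFinset.set_ncard_biUnion_le s
    _ ≤ ht.toFinset.card • m := Finset.sum_le_card_nsmul _ _ _ (by simpa using hs)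
    _ = t.ncard * m := by rw [smul_eq_mul, Set.ncard_eq_toFinset_card _ ht]

section ImportantSets

variable {W : Type*} {H : SimpleGraph W} {S A B : Set W} {x y : W}

def cutSet (H : SimpleGraph W) (X : Set W) : Set (Sym2 W) :=
  {e | e ∈ H.edgeSet ∧ ∃ a b, e = s(a, b) ∧ a ∈ X ∧ b ∉ X}

lemma cutCard_eq_ncard_cutSet (H : SimpleGraph W) (X : Set W) :
    cutCard H X = (cutSet H X).ncard :=
  Nat.card_coe_set_eq _

lemma mk_mem_cutSet_iff {X : Set W} {a b : W} :
    s(a, b) ∈ cutSet H X ↔ H.Adj a b ∧ (a ∈ X ∧ b ∉ X ∨ b ∈ X ∧ a ∉ X) := by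
  simp only [cutSet, Set.mem_ofPred_eq, mem_edgeSet, Sym2.eq_iff]
  constructor
  · rintro ⟨h, c, d, ⟨rfl, rfl⟩ | ⟨rfl, rfl⟩, hc, hd⟩ <;> tauto
  · rintro ⟨h, ⟨ha, hb⟩ | ⟨hb, ha⟩⟩
    · exact ⟨h, a, b, Or.inl ⟨rfl, rfl⟩, ha, hb⟩
    · exact ⟨h, b, a, Or.inr ⟨rfl, rfl⟩, hb, ha⟩

lemma cutCard_union_add_cutCard_inter_le [Finite W] (A B : Set W) :
    cutCard H (A ∪ B) + cutCard H (A ∩ B) ≤ cutCard H A + cutCard H B := by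
  have hunion : cutSet H (A ∪ B) ∪ cutSet H (A ∩ B) ⊆ cutSet H A ∪ cutSet H B := by
    intro e
    induction e using Sym2.ind with | _ a b => ?_
    simp only [Set.mem_union, Set.mem_inter_iff, mk_mem_cutSet_iff]
    tauto
  have hinter : cutSet H (A ∪ B) ∩ cutSet H (A ∩ B) ⊆ cutSet H A ∩ cutSet H B := by
    intro e
    induction e using Sym2.ind with | _ a b => ?_
    simp only [Set.mem_union, Set.mem_inter_iff, mk_mem_cutSet_iff]
    tauto
  simp only [cutCard_eq_ncard_cutSet]
  rw [← Set.ncard_union_add_ncard_inter (cutSet H A), ← Set.ncard_union_add_ncard_inter]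
  exact add_le_add (Set.ncard_le_ncard hunion) (Set.ncard_le_ncard hinter)

lemma cutSet_deleteEdges (e : Sym2 W) (X : Set W) :
    cutSet (H.deleteEdges {e}) X = cutSet H X \ {e} := by
  ext f
  simp only [cutSet, edgeSet_deleteEdges, Set.mem_sdiff, Set.mem_ofPred_eq]
  tauto

lemma cutCard_le_cutCard_deleteEdges_add_one [Finite W] (e : Sym2 W) (X : Set W) :
    cutCard H X ≤ cutCard (H.deleteEdges {e}) X + 1 := by
  simpa [cutCard_eq_ncard_cutSet, cutSet_deleteEdges] using
    Set.ncard_le_ncard_sdiff_add_ncard (cutSet H X) {e}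

lemma cutCard_deleteEdges_add_one [Finite W] {e : Sym2 W} {X : Set W} (he : e ∈ cutSet H X) :
    cutCard (H.deleteEdges {e}) X + 1 = cutCard H X := by
  simpa [cutCard_eq_ncard_cutSet, cutSet_deleteEdges] using Set.ncard_sdiff_singleton_add_one he

lemma cutCard_sUnion_le [Finite W] {F : Set (Set W)} {p : ℕ}
    (hF : ∀ X ∈ F, cutCard H X ≤ p) : cutCard H (⋃₀ F) ≤ F.ncard * p := by
  have hsub : cutSet H (⋃₀ F) ⊆ ⋃ X ∈ F, cutSet H X := by
    rintro _ ⟨hadj, a, b, rfl, ⟨X, hX, haX⟩, hb⟩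
    exact Set.mem_biUnion hX ⟨hadj, a, b, rfl, haX, fun hbX => hb ⟨X, hX, hbX⟩⟩
  rw [cutCard_eq_ncard_cutSet]
  exact (Set.ncard_le_ncard hsub).trans (Set.ncard_biUnion_le_ncard_mul (Set.toFinite F)
    fun X hX => cutCard_eq_ncard_cutSet H X ▸ hF X hX)

lemma induce_deleteEdges_of_notMem {X : Set W} {u v : W} (hv : v ∉ X) :
    (H.deleteEdges {s(u, v)}).induce X = H.induce X := by
  ext a b
  simp only [comap_adj, Function.Embedding.subtype_apply, deleteEdges_adj,
    Set.mem_singleton_iff, Sym2.eq_iff, and_iff_left_iff_imp]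
  rintro - (⟨-, rfl⟩ | ⟨rfl, -⟩)
  · exact hv b.2
  · exact hv a.2

lemma eq_of_cutCard_eq_zero [Finite W] {D X : Set W} (hD : cutCard H D = 0)
    (hDc : (H.induce D).Connected) (hX : (H.induce X).Connected) (hDX : D ⊆ X) : X = D := by
  refine Set.Subset.antisymm (fun b hbX => ?_) hDX
  by_contra hbD
  obtain ⟨⟨a, haD⟩⟩ := hDc.nonempty
  obtain ⟨w⟩ := hX.preconnected ⟨a, hDX haD⟩ ⟨b, hbX⟩
  obtain ⟨d, -, hd, hd'⟩ := w.exists_boundary_dart (Subtype.val ⁻¹' D) haD hbD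
  have hcut : s(d.fst.1, d.snd.1) ∈ cutSet H D := mk_mem_cutSet_iff.2 ⟨d.adj, Or.inl ⟨hd, hd'⟩⟩
  rw [cutCard_eq_ncard_cutSet, Set.ncard_eq_zero] at hD
  simp [hD] at hcut

/-- Among the connected sets between `S` and `D`, a maximal one has no boundary edge ending
inside `D`, so all its boundary edges cross `D` as well. -/
lemma exists_connected_between_cutCard_le [Finite W] {D : Set W}
    (hS : (H.induce S).Connected) (hSD : S ⊆ D) :
    ∃ C, S ⊆ C ∧ C ⊆ D ∧ (H.induce C).Connected ∧ cutCard H C ≤ cutCard H D := by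
  obtain ⟨C, ⟨hSC, hCD, hC⟩, hmax⟩ :=
    (Set.toFinite {C | S ⊆ C ∧ C ⊆ D ∧ (H.induce C).Connected}).exists_maximal
      ⟨S, subset_rfl, hSD, hS⟩
  refine ⟨C, hSC, hCD, hC, ?_⟩
  simp only [cutCard_eq_ncard_cutSet]
  refine Set.ncard_le_ncard ?_
  rintro _ ⟨hadj, a, b, rfl, ha, hb⟩
  refine ⟨hadj, a, b, rfl, hCD ha, fun hbD => hb ?_⟩
  have hCb : (H.induce (C ∪ {a, b})).Connected :=
    induce_union_connected hC.preconnected (induce_pair_connected_of_adj hadj).preconnected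
      ⟨a, ha, Set.mem_insert a _⟩
  refine hmax ⟨hSC.trans Set.subset_union_left, ?_, hCb⟩ Set.subset_union_left (by simp)
  simp [Set.insert_subset_iff, hCD ha, hbD, hCD]

def IsSeparatingSide (H : SimpleGraph W) (S : Set W) (y : W) (X : Set W) : Prop :=
  S ⊆ X ∧ y ∉ X ∧ (H.induce X).Connected

lemma IsSeparatingSide.union (hS : S.Nonempty) (hA : IsSeparatingSide H S y A)
    (hB : IsSeparatingSide H S y B) : IsSeparatingSide H S y (A ∪ B) :=
  ⟨hA.1.trans Set.subset_union_left, by simp [hA.2.1, hB.2.1],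
    induce_union_connected hA.2.2.preconnected hB.2.2.preconnected
      (hS.mono (Set.subset_inter hA.1 hB.1))⟩

/-- Submodularity, with the intersection replaced by a connected separating side inside it. -/
lemma IsSeparatingSide.cutCard_union_add_le [Finite W] (hS : (H.induce S).Connected)
    (hA : IsSeparatingSide H S y A) (hB : IsSeparatingSide H S y B) {m : ℕ}
    (hm : ∀ X, IsSeparatingSide H S y X → m ≤ cutCard H X) :
    cutCard H (A ∪ B) + m ≤ cutCard H A + cutCard H B := by
  obtain ⟨C, hSC, hCAB, hC, hCcut⟩ :=
    exists_connected_between_cutCard_le hS (Set.subset_inter hA.1 hB.1)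
  have hmC := hm C ⟨hSC, fun hy => hA.2.1 (hCAB hy).1, hC⟩
  have := cutCard_union_add_cutCard_inter_le (H := H) A B
  omega

def IsFurthestMinimumSide (H : SimpleGraph W) (S : Set W) (y : W) (Xs : Set W) : Prop :=
  IsSeparatingSide H S y Xs ∧
    (∀ X, IsSeparatingSide H S y X → cutCard H Xs ≤ cutCard H X) ∧
    ∀ X, IsSeparatingSide H S y X → cutCard H X ≤ cutCard H Xs → X ⊆ Xs

lemma exists_isFurthestMinimumSide [Finite W] (hS : (H.induce S).Connected)
    (hne : ∃ X, IsSeparatingSide H S y X) : ∃ Xs, IsFurthestMinimumSide H S y Xs := by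
  obtain ⟨X₀, hX₀, hX₀min⟩ :=
    Set.exists_min_image {X | IsSeparatingSide H S y X} (cutCard H) (Set.toFinite _) hne
  obtain ⟨Xs, ⟨hXs, hXscut⟩, hmax⟩ :=
    (Set.toFinite {X | IsSeparatingSide H S y X ∧ cutCard H X = cutCard H X₀}).exists_maximal
      ⟨X₀, hX₀, rfl⟩
  have hmin : ∀ X, IsSeparatingSide H S y X → cutCard H Xs ≤ cutCard H X :=
    fun X hX => hXscut ▸ hX₀min X hX
  refine ⟨Xs, hXs, hmin, fun X hX hle => ?_⟩
  have hU := hXs.union (Set.nonempty_coe_sort.1 hS.nonempty) hX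
  have hUcut := hXs.cutCard_union_add_le hS hX hmin
  have hUXs : Xs ∪ X ⊆ Xs :=
    hmax ⟨hU, by have := hmin _ hU; omega⟩ Set.subset_union_left
  exact Set.subset_union_right.trans hUXs

lemma IsFurthestMinimumSide.subset_of_importantSet [Finite W] (hS : (H.induce S).Connected)
    {X Xs : Set W} (hXs : IsFurthestMinimumSide H S y Xs) (hX : ImportantSet H x y X)
    (hSX : S ⊆ X) : Xs ⊆ X := by
  have hXside : IsSeparatingSide H S y X := ⟨hSX, hX.2.1, hX.2.2.1⟩
  have hU := hXside.union (Set.nonempty_coe_sort.1 hS.nonempty) hXs.1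
  have hUcut := hXside.cutCard_union_add_le hS hXs.1 hXs.2.1
  by_contra hXsX
  exact hX.2.2.2 ⟨X ∪ Xs, Set.ssubset_union_left_iff.2 hXsX, hU.2.1, hU.2.2, by omega⟩

def importantSets (H : SimpleGraph W) (x y : W) (p : ℕ) : Set (Set W) :=
  {X | ImportantSet H x y X ∧ cutCard H X ≤ p}

lemma ImportantSet.deleteEdges [Finite W] {X : Set W} {u v : W} (hX : ImportantSet H x y X)
    (he : s(u, v) ∈ cutSet H X) (hv : v ∉ X) :
    ImportantSet (H.deleteEdges {s(u, v)}) x y X := by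
  obtain ⟨hxX, hyX, hXconn, hXmax⟩ := hX
  refine ⟨hxX, hyX, by rwa [induce_deleteEdges_of_notMem hv], ?_⟩
  rintro ⟨X', hXX', hyX', hX'conn, hX'cut⟩
  have := cutCard_le_cutCard_deleteEdges_add_one (H := H) s(u, v) X'
  have := cutCard_deleteEdges_add_one he
  exact hXmax ⟨X', hXX', hyX', hX'conn.mono (comap_monotone _ (deleteEdges_le _)), by omega⟩

lemma sep_importantSets_subset_deleteEdges [Finite W] (p : ℕ) {u v : W} (huv : H.Adj u v) :
    {X ∈ importantSets H x y p | S ⊆ X ∧ u ∈ X ∧ v ∉ X} ⊆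
      {X ∈ importantSets (H.deleteEdges {s(u, v)}) x y (p - 1) | S ⊆ X} := by
  rintro X ⟨⟨hX, hXp⟩, hSX, huX, hvX⟩
  have he : s(u, v) ∈ cutSet H X := mk_mem_cutSet_iff.2 ⟨huv, Or.inl ⟨huX, hvX⟩⟩
  have := cutCard_deleteEdges_add_one he
  exact ⟨⟨hX.deleteEdges he hvX, by omega⟩, hSX⟩

theorem ncard_sep_importantSets_le [Finite W] (μ : ℕ) (H : SimpleGraph W) (S : Set W) (p : ℕ)
    (hS : (H.induce S).Connected)
    (hμ : ∀ X, IsSeparatingSide H S y X → 2 * p ≤ μ + cutCard H X) :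
    {X ∈ importantSets H x y p | S ⊆ X}.ncard ≤ 2 ^ μ := by
  induction μ using Nat.strong_induction_on generalizing H S p with
  | _ μ ih =>
  set F := {X ∈ importantSets H x y p | S ⊆ X}
  rcases F.eq_empty_or_nonempty with hF | ⟨X₀, ⟨hX₀, hX₀p⟩, hSX₀⟩
  · simp [hF]
  obtain ⟨Xs, hfurthest⟩ := exists_isFurthestMinimumSide hS ⟨X₀, hSX₀, hX₀.2.1, hX₀.2.2.1⟩
  have hXsF : ∀ X ∈ F, Xs ⊆ X := fun X hX => hfurthest.subset_of_importantSet hS hX.1.1 hX.2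
  obtain ⟨hXs, hmin, hfar⟩ := hfurthest
  have hXsp : cutCard H Xs ≤ p := (hmin X₀ ⟨hSX₀, hX₀.2.1, hX₀.2.2.1⟩).trans hX₀p
  have hμXs := hμ Xs hXs
  rcases Nat.eq_zero_or_pos (cutCard H Xs) with hXs0 | hXspos
  · have hF1 : F ⊆ {Xs} := fun X hX =>
      eq_of_cutCard_eq_zero hXs0 hXs.2.2 hX.1.1.2.2.1 (hXsF X hX)
    exact (Set.ncard_le_ncard hF1).trans (by simp [Nat.one_le_two_pow])
  obtain ⟨μ', rfl⟩ : ∃ μ', μ = μ' + 1 := ⟨μ - 1, by omega⟩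
  obtain ⟨_, ⟨huv, u, v, rfl, hu, hv⟩⟩ :=
    Set.nonempty_of_ncard_ne_zero (s := cutSet H Xs) (by rw [← cutCard_eq_ncard_cutSet]; omega)
  have hcontaining : {X ∈ F | v ∈ X}.ncard ≤ 2 ^ μ' := by
    refine (Set.ncard_le_ncard ?_).trans (ih μ' (by omega) H (Xs ∪ {v}) p ?_ ?_)
    · rintro X ⟨hX, hvX⟩
      exact ⟨hX.1, Set.union_subset (hXsF X hX) (Set.singleton_subset_iff.2 hvX)⟩
    · exact connected_induce_union hXs.2.2.preconnected Preconnected.of_subsingleton hu rfl huv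
    · intro X hX
      have hXS : IsSeparatingSide H S y X := ⟨hXs.1.trans (Set.subset_union_left.trans hX.1), hX.2⟩
      have hlt : cutCard H Xs < cutCard H X := (hmin X hXS).lt_of_ne fun h =>
        hv (hfar X hXS h.ge (hX.1 (Set.mem_union_right _ rfl)))
      omega
  have hcutting : {X ∈ F | v ∉ X}.ncard ≤ 2 ^ μ' := by
    refine (Set.ncard_le_ncard ?_).trans
      (ih μ' (by omega) (H.deleteEdges {s(u, v)}) S (p - 1) ?_ ?_)
    · rintro X ⟨hX, hvX⟩
      exact sep_importantSets_subset_deleteEdges p huv ⟨hX.1, hX.2, hXsF X hX hu, hvX⟩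
    · rwa [induce_deleteEdges_of_notMem fun hvS => hv (hXs.1 hvS)]
    · rintro X ⟨hSX, hyX, hX⟩
      have := hmin X ⟨hSX, hyX, hX.mono (comap_monotone _ (deleteEdges_le _))⟩
      have := cutCard_le_cutCard_deleteEdges_add_one (H := H) s(u, v) X
      omega
  calc F.ncard ≤ ({X ∈ F | v ∈ X} ∪ {X ∈ F | v ∉ X}).ncard :=
        Set.ncard_le_ncard fun X hX => (em (v ∈ X)).imp (⟨hX, ·⟩) (⟨hX, ·⟩)
    _ ≤ {X ∈ F | v ∈ X}.ncard + {X ∈ F | v ∉ X}.ncard := Set.ncard_union_le _ _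
    _ ≤ 2 ^ (μ' + 1) := by rw [pow_succ]; omega

theorem ncard_importantSets_le [Finite W] (H : SimpleGraph W) (x y : W) (p : ℕ) :
    (importantSets H x y p).ncard ≤ 4 ^ p := by
  have hx : (H.induce {x}).Connected := by
    rw [induce_singleton_eq_top]
    exact connected_top
  have h := ncard_sep_importantSets_le (x := x) (y := y) (2 * p) H {x} p hx fun _ _ => by omega
  rwa [Set.sep_eq_self_iff_mem_true.2 fun X hX => Set.singleton_subset_iff.2 hX.1.1, pow_mul]
    at h

section Apex

variable {G : SimpleGraph V} {Y : Set V}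

lemma addApex_adj_some_some {a b : V} (h : G.Adj a b) : (addApex G Y).Adj (some a) (some b) :=
  (fromRel_adj _ _ _).2 ⟨by simpa using h.ne, Or.inl (Or.inl ⟨a, b, rfl, rfl, h⟩)⟩

lemma addApex_adj_some_none {v : V} (h : v ∈ Y) : (addApex G Y).Adj (some v) none :=
  (fromRel_adj _ _ _).2 ⟨by simp, Or.inl (Or.inr ⟨v, rfl, rfl, h⟩)⟩

lemma cutCard_le_cutCard_addApex [Finite V] (Z : Set (Option V)) :
    cutCard G {v | some v ∈ Z} ≤ cutCard (addApex G Y) Z := by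
  simp only [cutCard_eq_ncard_cutSet]
  refine Set.ncard_le_ncard_of_injOn (Sym2.map some) ?_
    (Sym2.map.injective (Option.some_injective V)).injOn
  intro e
  induction e using Sym2.ind with | _ a b => ?_
  rw [Sym2.map_mk, mk_mem_cutSet_iff, mk_mem_cutSet_iff]
  exact And.imp_left addApex_adj_some_some

lemma ncard_inter_le_cutCard_addApex [Finite V] {Z : Set (Option V)} (hZ : none ∉ Z) :
    Nat.card {v | some v ∈ Z ∧ v ∈ Y} ≤ cutCard (addApex G Y) Z := by
  rw [Nat.card_coe_set_eq, cutCard_eq_ncard_cutSet]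
  refine Set.ncard_le_ncard_of_injOn (fun v => s(some v, none)) ?_ ?_
  · rintro v ⟨hvZ, hvY⟩
    exact mk_mem_cutSet_iff.2 ⟨addApex_adj_some_none hvY, Or.inl ⟨hvZ, hZ⟩⟩
  · intro a _ b _ h
    simpa using h

lemma importantUnion_eq_sUnion (T : Set V) (p : ℕ) :
    importantUnion G Y T p = ⋃₀ ⋃ x ∈ T, importantSets (addApex G Y) (some x) none p := by
  ext w
  simp only [importantUnion, importantSets, Set.mem_sUnion, Set.mem_iUnion, Set.mem_ofPred_eq]
  constructor
  · rintro ⟨x, hx, X, hX, hXp, hwX⟩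
    exact ⟨X, ⟨x, hx, hX, hXp⟩, hwX⟩
  · rintro ⟨X, ⟨x, hx, hX, hXp⟩, hwX⟩
    exact ⟨x, hx, X, hX, hXp, hwX⟩

lemma none_notMem_importantUnion (T : Set V) (p : ℕ) : none ∉ importantUnion G Y T p := by
  rintro ⟨x, -, X, hX, -, hnX⟩
  exact hX.2.1 hnX

lemma cutCard_importantUnion_le [Finite V] (T : Set V) (p : ℕ) :
    cutCard (addApex G Y) (importantUnion G Y T p) ≤ p * T.ncard * 4 ^ p := by
  rw [importantUnion_eq_sUnion]
  calc _ ≤ (⋃ x ∈ T, importantSets (addApex G Y) (some x) none p).ncard * p := by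
        refine cutCard_sUnion_le ?_
        simp only [Set.mem_iUnion]
        rintro X ⟨x, -, -, hXp⟩
        exact hXp
    _ ≤ (T.ncard * 4 ^ p) * p := Nat.mul_le_mul_right _ <|
        Set.ncard_biUnion_le_ncard_mul (Set.toFinite T) fun x _ => ncard_importantSets_le _ _ _ _
    _ = p * T.ncard * 4 ^ p := by ring

end Apex

end ImportantSets

theorem stmt14_general {V : Type*} [Fintype V] (G : SimpleGraph V) (k t : ℕ)
    (T1 T2 : Set V)
    (ht : Nat.card T1 + Nat.card T2 ≤ t) (Y : Set V) :
    cutCard (addApex G Y) (importantUnion G Y (T1 ∪ T2) (4 * k ^ 2))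
        ≤ (4 * k ^ 2) * t * 4 ^ (4 * k ^ 2) ∧
    cutCard G {v : V | some v ∈ importantUnion G Y (T1 ∪ T2) (4 * k ^ 2)}
        ≤ (4 * k ^ 2) * t * 4 ^ (4 * k ^ 2) ∧
    Nat.card {v : V | some v ∈ importantUnion G Y (T1 ∪ T2) (4 * k ^ 2) ∧ v ∈ Y}
        ≤ (4 * k ^ 2) * t * 4 ^ (4 * k ^ 2) := by
  have hT : (T1 ∪ T2).ncard ≤ t := by
    rw [Nat.card_coe_set_eq, Nat.card_coe_set_eq] at ht
    exact (Set.ncard_union_le T1 T2).trans ht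
  have hcut : cutCard (addApex G Y) (importantUnion G Y (T1 ∪ T2) (4 * k ^ 2))
      ≤ (4 * k ^ 2) * t * 4 ^ (4 * k ^ 2) :=
    (cutCard_importantUnion_le _ _).trans (by gcongr)
  exact ⟨hcut, (cutCard_le_cutCard_addApex _).trans hcut,
    (ncard_inter_le_cutCard_addApex (none_notMem_importantUnion _ _)).trans hcut⟩

/-- `d_{G*}(Z) ≤ (4k²)·t·4^(4k²)` (hence also `d_G(Z) ≤ (4k²)·t·4^(4k²)`) and
`|Z ∩ Y| ≤ (4k²)·t·4^(4k²)`. -/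
theorem stmt14 {V : Type*} [Fintype V] (G : SimpleGraph V) (k t : ℕ)
    (T1 T2 : Set V) (hdisj : Disjoint T1 T2)
    (ht : Nat.card T1 + Nat.card T2 ≤ t) (Y : Set V) :
    cutCard (addApex G Y) (importantUnion G Y (T1 ∪ T2) (4 * k ^ 2))
        ≤ (4 * k ^ 2) * t * 4 ^ (4 * k ^ 2) ∧
    cutCard G {v : V | some v ∈ importantUnion G Y (T1 ∪ T2) (4 * k ^ 2)}
        ≤ (4 * k ^ 2) * t * 4 ^ (4 * k ^ 2) ∧
    Nat.card {v : V | some v ∈ importantUnion G Y (T1 ∪ T2) (4 * k ^ 2) ∧ v ∈ Y}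
        ≤ (4 * k ^ 2) * t * 4 ^ (4 * k ^ 2) :=
  stmt14_general G k t T1 T2 ht Y
end
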